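/- arXiv:1205.1984 — 4 statements merged into one kernel-verified Lean document; each statement's English description precedes it below -/
import Mathlib

section
/- Let d : [0,1] → (0,∞) be continuous and let g : [0,1]² → [0,∞) be a bounded measurable kernel. Suppose φ : [0,1] → ℝ is a continuous solution of the Fredholm equation φ(x) = d(x){1 - ∫_0^x (φ(x)-φ(u))/(x-u) · g(u,x) du + ∫_x^1 (φ(v)-φ(x))/(v-x) · g(x,v) dv}, where the integrands are integrable for each x. Then max_{x∈[0,1]} φ(x) ≤ max_{x∈[0,1]} d(x). -/
open MeasureTheory Set intervalIntegral

/-- Maximum principle for the Fredholm equation from interval censoring: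
any continuous solution `φ` of the integral equation satisfies
`max φ ≤ max d` on `[0,1]`. -/
theorem stmt2 (d : ℝ → ℝ) (hd : ContinuousOn d (Icc 0 1))
    (hdpos : ∀ x ∈ Icc (0:ℝ) 1, 0 < d x)
    (g : ℝ × ℝ → ℝ) (hgmeas : Measurable g) (hgnn : ∀ p, 0 ≤ g p)
    (Cg : ℝ) (hgbd : ∀ p, g p ≤ Cg)
    (φ : ℝ → ℝ) (hφ : ContinuousOn φ (Icc 0 1))
    (hint₁ : ∀ x ∈ Icc (0:ℝ) 1,
      IntervalIntegrable (fun u => (φ x - φ u) / (x - u) * g (u, x)) volume 0 x)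
    (hint₂ : ∀ x ∈ Icc (0:ℝ) 1,
      IntervalIntegrable (fun v => (φ v - φ x) / (v - x) * g (x, v)) volume x 1)
    (heq : ∀ x ∈ Icc (0:ℝ) 1,
      φ x = d x * (1 - (∫ u in (0:ℝ)..x, (φ x - φ u) / (x - u) * g (u, x))
                     + ∫ v in x..(1:ℝ), (φ v - φ x) / (v - x) * g (x, v))) :
    sSup (φ '' Icc (0:ℝ) 1) ≤ sSup (d '' Icc (0:ℝ) 1) := by
  have hIcc : IsCompact (Icc (0:ℝ) 1) := isCompact_Icc
  have hne : (Icc (0:ℝ) 1).Nonempty := ⟨0, by norm_num⟩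
  obtain ⟨x₀, hx₀, hmax⟩ := hIcc.exists_isMaxOn hne hφ
  have hx0 : (0:ℝ) ≤ x₀ := hx₀.1
  have hx1 : x₀ ≤ 1 := hx₀.2
  -- first integral nonneg
  have hA : 0 ≤ ∫ u in (0:ℝ)..x₀, (φ x₀ - φ u) / (x₀ - u) * g (u, x₀) := by
    apply intervalIntegral.integral_nonneg hx0
    intro u hu
    have hu' : u ∈ Icc (0:ℝ) 1 := ⟨hu.1, hu.2.trans hx1⟩
    have h1 : 0 ≤ φ x₀ - φ u := sub_nonneg.mpr (hmax hu')
    have h2 : 0 ≤ x₀ - u := sub_nonneg.mpr hu.2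
    exact mul_nonneg (div_nonneg h1 h2) (hgnn _)
  -- second integral nonpos
  have hB : (∫ v in x₀..(1:ℝ), (φ v - φ x₀) / (v - x₀) * g (x₀, v)) ≤ 0 := by
    have hB' : 0 ≤ ∫ v in x₀..(1:ℝ), -((φ v - φ x₀) / (v - x₀) * g (x₀, v)) := by
      apply intervalIntegral.integral_nonneg hx1
      intro v hv
      have hv' : v ∈ Icc (0:ℝ) 1 := ⟨hx0.trans hv.1, hv.2⟩
      have h1 : φ v - φ x₀ ≤ 0 := sub_nonpos.mpr (hmax hv')
      have h2 : 0 ≤ v - x₀ := sub_nonneg.mpr hv.1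
      have := mul_nonpos_of_nonpos_of_nonneg
        (div_nonpos_of_nonpos_of_nonneg h1 h2) (hgnn (x₀, v))
      linarith
    rw [intervalIntegral.integral_neg] at hB'
    linarith
  have hdx : 0 < d x₀ := hdpos x₀ hx₀
  have key : φ x₀ ≤ d x₀ := by
    have := heq x₀ hx₀
    nlinarith [this]
  have h1 : sSup (φ '' Icc (0:ℝ) 1) ≤ φ x₀ := by
    apply csSup_le (hne.image _)
    rintro y ⟨x, hx, rfl⟩
    exact hmax hx
  have h2 : d x₀ ≤ sSup (d '' Icc (0:ℝ) 1) :=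
    le_csSup (hIcc.bddAbove_image hd) ⟨x₀, hx₀, rfl⟩
  linarith
end

section
/- Let X be a random variable with values in [0,1] with distribution function F_0, and let Y be uniform on [0,1], independent of X. Then Var(X) + 1/12 ≥ ∫_0^1 F_0(t)(1-F_0(t)) dt, with equality if and only if F_0 is the uniform distribution function on [0,1]. -/
/-!
Let `U` be uniform on `[0,1]` and `F = F₀`. Expanding all integrals in terms of
`∫ F`, `∫ t F(t)` and `∫ F²` shows that the difference between the two sides is exactly the
variance of `F(U) - U`. Hence the inequality, and equality forces `F(t) = t + c` for almost
every `t ∈ (0,1)`. A monotone function that agrees almost everywhere with a continuous one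
agrees with it everywhere on the open interval, and the boundary values `0 ≤ F 0`,
`F 1 = 1` then force `c = 0`.
-/

open MeasureTheory Set intervalIntegral Filter Topology ProbabilityTheory

instance : IsProbabilityMeasure (volume.restrict (Ioc (0:ℝ) 1)) := ⟨by simp⟩

lemma exists_mem_Ioo_eq_of_ae_restrict {f g : ℝ → ℝ} {s : Set ℝ}
    (h : ∀ᵐ t ∂volume.restrict s, f t = g t) {l u : ℝ} (hlu : l < u)
    (hsub : Ioo l u ⊆ s) : ∃ t ∈ Ioo l u, f t = g t := by
  have : (ae (volume.restrict (Ioo l u))).NeBot := ae_restrict_neBot.2 (by simp [hlu])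
  exact ((ae_restrict_mem measurableSet_Ioo).and
    (ae_restrict_of_ae_restrict_of_subset hsub h)).exists

theorem Monotone.eqOn_Ioo_of_ae_eq {F g : ℝ → ℝ} (hF : Monotone F) (hg : Continuous g)
    {a b : ℝ} (h : ∀ᵐ t ∂volume.restrict (Ioo a b), F t = g t) : EqOn F g (Ioo a b) := by
  intro x hx
  apply le_antisymm
  · by_contra! hlt
    have : Ioo a b ∩ {t | g t < F x} ∈ 𝓝[>] x :=
      nhdsWithin_le_nhds (inter_mem (isOpen_Ioo.mem_nhds hx)
        (hg.continuousAt.eventually_lt continuousAt_const hlt))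
    obtain ⟨u, hxu, hsub⟩ := mem_nhdsGT_iff_exists_Ioo_subset.1 this
    obtain ⟨t, ht, hFt⟩ := exists_mem_Ioo_eq_of_ae_restrict h hxu
      (hsub.trans inter_subset_left)
    linarith [hF ht.1.le, (hsub ht).2.out]
  · by_contra! hlt
    have : Ioo a b ∩ {t | F x < g t} ∈ 𝓝[<] x :=
      nhdsWithin_le_nhds (inter_mem (isOpen_Ioo.mem_nhds hx)
        (continuousAt_const.eventually_lt hg.continuousAt hlt))
    obtain ⟨l, hlx, hsub⟩ := mem_nhdsLT_iff_exists_Ioo_subset.1 this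
    obtain ⟨t, ht, hFt⟩ := exists_mem_Ioo_eq_of_ae_restrict h hlx
      (hsub.trans inter_subset_left)
    linarith [hF ht.2.le, (hsub ht).2.out]

theorem Monotone.apply_left_le_of_eqOn_Ioo {F g : ℝ → ℝ} (hF : Monotone F) (hg : Continuous g)
    {a b : ℝ} (hab : a < b) (h : EqOn F g (Ioo a b)) : F a ≤ g a :=
  le_on_closure (f := fun _ ↦ F a) (fun t ht ↦ h ht ▸ hF ht.1.le) continuousOn_const
    hg.continuousOn (by rw [closure_Ioo hab.ne]; exact left_mem_Icc.2 hab.le)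

theorem Monotone.le_apply_right_of_eqOn_Ioo {F g : ℝ → ℝ} (hF : Monotone F)
    (hg : Continuous g) {a b : ℝ} (hab : a < b) (h : EqOn F g (Ioo a b)) : g b ≤ F b :=
  le_on_closure (g := fun _ ↦ F b) (fun t ht ↦ h ht ▸ hF ht.2.le) hg.continuousOn
    continuousOn_const (by rw [closure_Ioo hab.ne]; exact right_mem_Icc.2 hab.le)

theorem Monotone.eqOn_Icc_id_of_ae_eq_add_const {F : ℝ → ℝ} (hF : Monotone F)
    (hF0 : 0 ≤ F 0) (hF1 : F 1 = 1) {c : ℝ}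
    (h : ∀ᵐ t ∂volume.restrict (Ioo 0 1), F t = t + c) :
    EqOn F id (Icc 0 1) := by
  have hg : Continuous fun t : ℝ ↦ t + c := by fun_prop
  have hIoo := hF.eqOn_Ioo_of_ae_eq hg h
  have hleft := hF.apply_left_le_of_eqOn_Ioo hg one_pos hIoo
  have hright := hF.le_apply_right_of_eqOn_Ioo hg one_pos hIoo
  have hc : c = 0 := by linarith
  intro x hx
  rcases hx.1.eq_or_lt with rfl | h0x
  · show F 0 = 0
    linarith
  rcases hx.2.eq_or_lt with rfl | hx1
  · exact hF1
  · simpa [hc] using hIoo ⟨h0x, hx1⟩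

theorem moment_variance_sub_efficient_variance_eq {f : ℝ → ℝ}
    (hf : IntervalIntegrable f volume 0 1)
    (hf2 : IntervalIntegrable (fun t ↦ f t ^ 2) volume 0 1) :
    2 * (∫ x in (0:ℝ)..1, x * (1 - f x)) - (∫ x in (0:ℝ)..1, (1 - f x)) ^ 2 + 1 / 12
        - ∫ t in (0:ℝ)..1, f t * (1 - f t) =
      (∫ t in (0:ℝ)..1, (f t - t) ^ 2) - (∫ t in (0:ℝ)..1, (f t - t)) ^ 2 := by
  have hid : IntervalIntegrable (fun t : ℝ ↦ t) volume 0 1 := intervalIntegrable_id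
  have hid2 : IntervalIntegrable (fun t : ℝ ↦ t ^ 2) volume 0 1 :=
    (continuous_pow 2).intervalIntegrable 0 1
  have hidf : IntervalIntegrable (fun t ↦ t * f t) volume 0 1 :=
    hf.continuousOn_mul continuousOn_id
  have e1 : ∫ x in (0:ℝ)..1, x * (1 - f x) = 1 / 2 - ∫ x in (0:ℝ)..1, x * f x := by
    simp_rw [mul_one_sub]
    rw [integral_sub hid hidf, integral_id]; norm_num
  have e2 : ∫ x in (0:ℝ)..1, (1 - f x) = 1 - ∫ x in (0:ℝ)..1, f x := by
    rw [integral_sub intervalIntegrable_const hf]; simp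
  have e3 : ∫ t in (0:ℝ)..1, f t * (1 - f t) =
      (∫ t in (0:ℝ)..1, f t) - ∫ t in (0:ℝ)..1, f t ^ 2 := by
    simp_rw [mul_one_sub, ← sq]
    exact integral_sub hf hf2
  have e4 : ∫ t in (0:ℝ)..1, (f t - t) ^ 2 =
      (∫ t in (0:ℝ)..1, f t ^ 2) - 2 * (∫ t in (0:ℝ)..1, t * f t) + 1 / 3 := by
    have : ∀ t : ℝ, (f t - t) ^ 2 = f t ^ 2 - 2 * (t * f t) + t ^ 2 := fun t ↦ by ring
    simp_rw [this]
    rw [integral_add (hf2.sub (hidf.const_mul 2)) hid2, integral_sub hf2 (hidf.const_mul 2),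
      intervalIntegral.integral_const_mul, integral_pow]
    norm_num
  have e5 : ∫ t in (0:ℝ)..1, (f t - t) = (∫ t in (0:ℝ)..1, f t) - 1 / 2 := by
    rw [integral_sub hf hid, integral_id]; norm_num
  rw [e1, e2, e3, e4, e5]
  ring

theorem variance_restrict_Ioc_zero_one_eq {g : ℝ → ℝ}
    (hg : MemLp g 2 (volume.restrict (Ioc 0 1))) :
    Var[g; volume.restrict (Ioc 0 1)] =
      (∫ t in (0:ℝ)..1, g t ^ 2) - (∫ t in (0:ℝ)..1, g t) ^ 2 := by
  rw [variance_eq_sub hg, integral_of_le zero_le_one, integral_of_le zero_le_one]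
  rfl

lemma cdf_eq_one_of_measure_Icc_eq_one {μ : Measure ℝ} [IsProbabilityMeasure μ] {a b : ℝ}
    (h : μ (Icc a b) = 1) : cdf μ b = 1 := by
  rw [cdf_eq_real, measureReal_def,
    le_antisymm prob_le_one (h ▸ measure_mono Icc_subset_Iic_self), ENNReal.toReal_one]

lemma memLp_cdf_sub_id (μ : Measure ℝ) :
    MemLp (fun t ↦ cdf μ t - t) 2 (volume.restrict (Ioc 0 1)) := by
  refine MemLp.of_bound ((monotone_cdf μ).measurable.sub measurable_id).aestronglyMeasurable 1
    (ae_restrict_of_forall_mem measurableSet_Ioc fun t ht ↦ ?_)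
  rw [Real.norm_eq_abs, abs_sub_le_iff]
  constructor <;> linarith [ht.1, ht.2, cdf_nonneg μ t, cdf_le_one μ t]

/-- In box-car deconvolution, the variance of the naive moment estimator,
`Var(X) + 1/12` with `Var(X) = 2∫_0^1 x(1-F₀(x))dx - (∫_0^1 (1-F₀(x))dx)²`,
dominates the efficient variance `∫_0^1 F₀(t)(1-F₀(t))dt`, with equality iff
`F₀` is the uniform distribution function on `[0,1]`. -/
theorem stmt7 (μ : Measure ℝ) [IsProbabilityMeasure μ] (hμ : μ (Icc 0 1) = 1)
    (F₀ : ℝ → ℝ) (hF₀ : ∀ t, F₀ t = (μ (Iic t)).toReal) :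
    (∫ t in (0:ℝ)..1, F₀ t * (1 - F₀ t)) ≤
      (2 * (∫ x in (0:ℝ)..1, x * (1 - F₀ x))
        - (∫ x in (0:ℝ)..1, (1 - F₀ x)) ^ 2) + 1 / 12 ∧
    ((∫ t in (0:ℝ)..1, F₀ t * (1 - F₀ t)) =
      (2 * (∫ x in (0:ℝ)..1, x * (1 - F₀ x))
        - (∫ x in (0:ℝ)..1, (1 - F₀ x)) ^ 2) + 1 / 12
      ↔ ∀ x ∈ Icc (0:ℝ) 1, F₀ x = x) := by
  obtain rfl : F₀ = cdf μ := funext fun t ↦ by rw [hF₀, cdf_eq_real, measureReal_def]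
  have hF := monotone_cdf μ
  have hX := memLp_cdf_sub_id μ
  have hgap : (2 * (∫ x in (0:ℝ)..1, x * (1 - cdf μ x))
      - (∫ x in (0:ℝ)..1, (1 - cdf μ x)) ^ 2) + 1 / 12
      - ∫ t in (0:ℝ)..1, cdf μ t * (1 - cdf μ t) =
        Var[fun t ↦ cdf μ t - t; volume.restrict (Ioc 0 1)] := by
    rw [variance_restrict_Ioc_zero_one_eq hX]
    exact moment_variance_sub_efficient_variance_eq hF.intervalIntegrable
      (Monotone.intervalIntegrable fun a b hab ↦ pow_le_pow_left₀ (cdf_nonneg μ a) (hF hab) 2)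
  have hvar_nonneg := variance_nonneg (fun t ↦ cdf μ t - t) (volume.restrict (Ioc 0 1))
  refine ⟨by linarith, fun heq ↦ ?_, fun hid ↦ ?_⟩
  · have hae := ae_eq_integral_of_variance_eq_zero hX (by linarith)
    refine hF.eqOn_Icc_id_of_ae_eq_add_const (c := ∫ t in Ioc 0 1, (cdf μ t - t))
      (cdf_nonneg μ 0) (cdf_eq_one_of_measure_Icc_eq_one hμ) ?_
    filter_upwards [ae_restrict_of_ae_restrict_of_subset Ioo_subset_Ioc_self hae] with t ht
    linarith
  · have hX0 : (fun t ↦ cdf μ t - t) =ᵐ[volume.restrict (Ioc 0 1)] 0 :=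
      ae_restrict_of_forall_mem measurableSet_Ioc fun t ht ↦ by
        simp [hid t (Ioc_subset_Icc_self ht)]
    rw [variance_congr hX0, variance_zero] at hgap
    linarith
end

section
/- Let X and Y be independent random variables with X distributed according to a distribution function F_0 on [0,1] (absolutely continuous) and Y uniform on [0,1]. Let Z = X + Y, Δ = 1_{{Z ≤ 1}}, and Z' = Z if Δ = 1, Z' = Z - 1 if Δ = 0. Then Z' is uniformly distributed on [0,1], and P(Δ = 1 | Z' = t) = F_0(t) for almost every t ∈ [0,1]; equivalently, for every interval [t, t+h] ⊂ (0,1), P(Δ=1, Z' ∈ [t,t+h]) = ∫_t^{t+h} F_0(u) du and P(Δ=0, Z' ∈ [t,t+h]) = ∫_t^{t+h} (1 - F_0(u)) du. -/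
open MeasureTheory Set intervalIntegral

lemma aux_swap {μ τ : Measure ℝ} [SFinite μ] [SFinite τ] {S : Set (ℝ × ℝ)}
    (hS : MeasurableSet S) :
    ∫⁻ y, μ ((fun x => (x, y)) ⁻¹' S) ∂τ = ∫⁻ x, τ (Prod.mk x ⁻¹' S) ∂μ := by
  rw [← Measure.prod_apply_symm hS, Measure.prod_apply hS]

lemma aux_min_add (x s : ℝ) (hx0 : 0 ≤ x) (hx1 : x ≤ 1) :
    ENNReal.ofReal (min (1 - x) (s - x)) + ENNReal.ofReal (min x s)
      = ENNReal.ofReal (min 1 s) := by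
  rcases le_or_gt s 0 with hs | hs
  · rw [min_eq_right (by linarith : s - x ≤ 1 - x), min_eq_right (by linarith : s ≤ x),
      min_eq_right (by linarith : s ≤ 1), ENNReal.ofReal_eq_zero.mpr (by linarith), zero_add]
  rcases le_or_gt s x with hsx | hsx
  · rw [min_eq_right (by linarith : s - x ≤ 1 - x), min_eq_right hsx,
      min_eq_right (by linarith : s ≤ 1), ENNReal.ofReal_eq_zero.mpr (by linarith), zero_add]
  rcases le_or_gt s 1 with hs1 | hs1
  · rw [min_eq_right (by linarith : s - x ≤ 1 - x), min_eq_left hsx.le, min_eq_right hs1,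
      ← ENNReal.ofReal_add (by linarith) hx0]
    ring_nf
  · rw [min_eq_left (by linarith : 1 - x ≤ s - x), min_eq_left (by linarith : x ≤ s),
      min_eq_left hs1.le, ← ENNReal.ofReal_add (by linarith) hx0]
    norm_num

lemma aux_restrict_Icc (a b : ℝ) :
    (volume.restrict (Icc (0:ℝ) 1)) (Icc a b) = ENNReal.ofReal (min b 1 - max a 0) := by
  rw [Measure.restrict_apply measurableSet_Icc, Icc_inter_Icc, Real.volume_Icc]

/-- Box-car deconvolution reduces to current status: with `X ~ F₀` absolutely
continuous on `[0,1]`, `Y` uniform on `[0,1]` independent of `X`, `Z = X + Y`,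
`Δ = 1_{Z ≤ 1}` and `Z' = Z` if `Δ = 1`, `Z' = Z - 1` otherwise, `Z'` is uniform
on `[0,1]` and for `[t,t+h] ⊂ (0,1)`:
`P(Δ=1, Z' ∈ [t,t+h]) = ∫_t^{t+h} F₀` and `P(Δ=0, Z' ∈ [t,t+h]) = ∫_t^{t+h} (1-F₀)`. -/
theorem stmt8 {Ω : Type*} [MeasureSpace Ω] [IsProbabilityMeasure (volume : Measure Ω)]
    (X Y : Ω → ℝ) (hX : Measurable X) (hY : Measurable Y)
    (hindep : ProbabilityTheory.IndepFun X Y)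
    (hYunif : Measure.map Y (volume : Measure Ω) = volume.restrict (Icc 0 1))
    (μ : Measure ℝ) (hXlaw : Measure.map X (volume : Measure Ω) = μ)
    (hac : μ ≪ volume) (hsupp : μ (Icc 0 1) = 1)
    (F₀ : ℝ → ℝ) (hF₀ : ∀ t, F₀ t = (μ (Iic t)).toReal)
    (Z' : Ω → ℝ)
    (hZ' : ∀ ω, Z' ω = if X ω + Y ω ≤ 1 then X ω + Y ω else X ω + Y ω - 1) :
    Measure.map Z' (volume : Measure Ω) = volume.restrict (Icc 0 1) ∧
    ∀ t h : ℝ, 0 < t → 0 ≤ h → t + h < 1 →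
      ((volume : Measure Ω) {ω | X ω + Y ω ≤ 1 ∧ Z' ω ∈ Icc t (t + h)}).toReal
        = (∫ u in t..(t + h), F₀ u) ∧
      ((volume : Measure Ω) {ω | ¬ X ω + Y ω ≤ 1 ∧ Z' ω ∈ Icc t (t + h)}).toReal
        = ∫ u in t..(t + h), (1 - F₀ u) := by
  have hμprob : IsProbabilityMeasure μ := hXlaw ▸ Measure.isProbabilityMeasure_map hX.aemeasurable
  set ν : Measure ℝ := volume.restrict (Icc 0 1) with hνdef
  have hpair : Measurable fun ω => (X ω, Y ω) := hX.prodMk hY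
  have hjoint : Measure.map (fun ω => (X ω, Y ω)) volume = μ.prod ν := by
    rw [← hXlaw, ← hYunif]
    exact (ProbabilityTheory.indepFun_iff_map_prod_eq_prod_map_map
      hX.aemeasurable hY.aemeasurable).mp hindep
  have hev : ∀ S : Set (ℝ × ℝ), MeasurableSet S →
      volume ((fun ω => (X ω, Y ω)) ⁻¹' S) = ∫⁻ x, ν (Prod.mk x ⁻¹' S) ∂μ := by
    intro S hS
    rw [← Measure.map_apply hpair hS, hjoint, Measure.prod_apply hS]
  have hae : ∀ᵐ x ∂μ, x ∈ Icc (0:ℝ) 1 := by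
    rw [ae_iff]
    have h1 := measure_compl (measurableSet_Icc : MeasurableSet (Icc (0:ℝ) 1)) (measure_ne_top μ _)
    rw [measure_univ, hsupp, tsub_self] at h1
    exact h1
  have hadd : Measurable fun p : ℝ × ℝ => p.1 + p.2 := measurable_fst.add measurable_snd
  have hZm : Measurable Z' := by
    have hfun : Z' = fun ω => if X ω + Y ω ≤ 1 then X ω + Y ω else X ω + Y ω - 1 := funext hZ'
    rw [hfun]
    exact Measurable.ite (measurableSet_le (hX.add hY) measurable_const) (hX.add hY)
      ((hX.add hY).sub measurable_const)
  constructor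
  · -- Z' is uniform on [0,1]
    have hPZ : IsProbabilityMeasure (Measure.map Z' (volume : Measure Ω)) :=
      Measure.isProbabilityMeasure_map hZm.aemeasurable
    refine Measure.ext_of_Iic _ _ (fun s => ?_)
    rw [Measure.map_apply hZm measurableSet_Iic]
    set S1 : Set (ℝ × ℝ) := {p | p.1 + p.2 ≤ 1 ∧ p.1 + p.2 ≤ s} with hS1def
    set S2 : Set (ℝ × ℝ) := {p | ¬ p.1 + p.2 ≤ 1 ∧ p.1 + p.2 - 1 ≤ s} with hS2def
    have hS1 : MeasurableSet S1 := by
      rw [hS1def, setOf_and]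
      exact (measurableSet_le hadd measurable_const).inter (measurableSet_le hadd measurable_const)
    have hS2 : MeasurableSet S2 := by
      rw [hS2def, setOf_and, ← compl_setOf]
      exact (measurableSet_le hadd measurable_const).compl.inter
        (measurableSet_le (hadd.sub measurable_const) measurable_const)
    have hsplit : Z' ⁻¹' Iic s =
        ((fun ω => (X ω, Y ω)) ⁻¹' S1) ∪ ((fun ω => (X ω, Y ω)) ⁻¹' S2) := by
      ext ω
      by_cases hω : X ω + Y ω ≤ 1
      · simp [hZ' ω, hω, hS1def, hS2def]
      · simp only [mem_preimage, mem_Iic, mem_union, hS1def, hS2def, mem_setOf_eq,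
          hZ' ω, if_neg hω]
        constructor
        · intro h2; exact Or.inr ⟨hω, h2⟩
        · rintro (⟨h1, -⟩ | ⟨-, h2⟩)
          · exact absurd h1 hω
          · exact h2
    have hdisj : Disjoint ((fun ω => (X ω, Y ω)) ⁻¹' S1) ((fun ω => (X ω, Y ω)) ⁻¹' S2) := by
      refine Disjoint.preimage _ (disjoint_left.mpr fun p hp hp2 => ?_)
      exact hp2.1 hp.1
    rw [hsplit, measure_union hdisj (hpair hS2), hev S1 hS1, hev S2 hS2,
      ← lintegral_add_left (measurable_measure_prodMk_left hS1)]
    have hconst : ∫⁻ x, (ν (Prod.mk x ⁻¹' S1) + ν (Prod.mk x ⁻¹' S2)) ∂μ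
        = ∫⁻ _, ENNReal.ofReal (min 1 s) ∂μ := by
      refine lintegral_congr_ae (hae.mono fun x hx => ?_)
      obtain ⟨hx0, hx1⟩ := hx
      show ν (Prod.mk x ⁻¹' S1) + ν (Prod.mk x ⁻¹' S2) = ENNReal.ofReal (min 1 s)
      have e1 : Prod.mk x ⁻¹' S1 = Iic (min (1 - x) (s - x)) := by
        ext y
        simp only [hS1def, mem_preimage, mem_setOf_eq, mem_Iic, le_min_iff]
        constructor
        · rintro ⟨h1, h2⟩; exact ⟨by linarith, by linarith⟩
        · rintro ⟨h1, h2⟩; exact ⟨by linarith, by linarith⟩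
      have e2 : Prod.mk x ⁻¹' S2 = Ioc (1 - x) (1 + s - x) := by
        ext y
        simp only [hS2def, mem_preimage, mem_setOf_eq, mem_Ioc, not_le]
        constructor
        · rintro ⟨h1, h2⟩; exact ⟨by linarith, by linarith⟩
        · rintro ⟨h1, h2⟩; exact ⟨by linarith, by linarith⟩
      have v1 : ν (Iic (min (1 - x) (s - x))) = ENNReal.ofReal (min (1 - x) (s - x)) := by
        rw [hνdef, Measure.restrict_apply measurableSet_Iic]
        have : Iic (min (1 - x) (s - x)) ∩ Icc 0 1 = Icc 0 (min (1 - x) (s - x)) := by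
          ext y
          simp only [mem_inter_iff, mem_Iic, mem_Icc, le_min_iff]
          constructor
          · rintro ⟨⟨h1, h2⟩, h3, h4⟩; exact ⟨h3, h1, h2⟩
          · rintro ⟨h0, h1, h2⟩; exact ⟨⟨h1, h2⟩, h0, by linarith⟩
        rw [this, Real.volume_Icc, sub_zero]
      have v2 : ν (Ioc (1 - x) (1 + s - x)) = ENNReal.ofReal (min x s) := by
        rw [hνdef, Measure.restrict_apply measurableSet_Ioc]
        have : Ioc (1 - x) (1 + s - x) ∩ Icc 0 1 = Ioc (1 - x) (min (1 + s - x) 1) := by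
          ext y
          simp only [mem_inter_iff, mem_Ioc, mem_Icc, le_min_iff]
          constructor
          · rintro ⟨⟨h1, h2⟩, h3, h4⟩; exact ⟨h1, h2, h4⟩
          · rintro ⟨h1, h2, h3⟩; exact ⟨⟨h1, h2⟩, by linarith, h3⟩
        rw [this, Real.volume_Ioc]
        congr 1
        rcases min_cases (1 + s - x) 1 with ⟨h1, h2⟩ | ⟨h1, h2⟩ <;>
          rcases min_cases x s with ⟨h3, h4⟩ | ⟨h3, h4⟩ <;> linarith
      rw [e1, e2, v1, v2, aux_min_add x s hx0 hx1]
    rw [hconst, lintegral_const, measure_univ, mul_one]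
    rw [hνdef, Measure.restrict_apply measurableSet_Iic]
    have : Iic s ∩ Icc 0 1 = Icc 0 (min s 1) := by
      ext y
      simp only [mem_inter_iff, mem_Iic, mem_Icc, le_min_iff]
      constructor
      · rintro ⟨h1, h2, h3⟩; exact ⟨h2, h1, h3⟩
      · rintro ⟨h0, h1, h2⟩; exact ⟨h1, h0, h2⟩
    rw [this, Real.volume_Icc, sub_zero, min_comm]
  · -- the two interval identities
    intro t h ht hh hth
    have htth : t ≤ t + h := by linarith
    -- the monotone/antitone measurability facts
    have hmono : Measurable fun u : ℝ => μ (Iic u) :=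
      Monotone.measurable fun a b hab => measure_mono (Iic_subset_Iic.mpr hab)
    have hanti : Measurable fun u : ℝ => μ (Ioi u) :=
      Antitone.measurable fun a b hab => measure_mono (Ioi_subset_Ioi hab)
    constructor
    · -- first identity
      set S : Set (ℝ × ℝ) := {p | p.1 + p.2 ∈ Icc t (t + h)} with hSdef
      have hS : MeasurableSet S := hadd measurableSet_Icc
      have hE : {ω | X ω + Y ω ≤ 1 ∧ Z' ω ∈ Icc t (t + h)} = (fun ω => (X ω, Y ω)) ⁻¹' S := by
        ext ω
        simp only [mem_setOf_eq, hZ' ω, mem_preimage, hSdef, mem_Icc]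
        constructor
        · rintro ⟨h1, h2⟩
          rw [if_pos h1] at h2
          exact h2
        · rintro ⟨h1, h2⟩
          have h3 : X ω + Y ω ≤ 1 := by linarith
          refine ⟨h3, ?_⟩
          rw [if_pos h3]
          exact ⟨h1, h2⟩
      have hL : volume ((fun ω => (X ω, Y ω)) ⁻¹' S) = ∫⁻ u in Ioc t (t + h), μ (Iic u) := by
        rw [hev S hS]
        have hswap := aux_swap (μ := μ) (τ := volume.restrict (Ioc t (t + h)))
          (S := {p : ℝ × ℝ | p.1 ≤ p.2}) (measurableSet_le measurable_fst measurable_snd)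
        have hl : (fun u => μ ((fun x => (x, u)) ⁻¹' {p : ℝ × ℝ | p.1 ≤ p.2}))
            = fun u => μ (Iic u) := rfl
        rw [hl] at hswap
        rw [hswap]
        refine lintegral_congr_ae (hae.mono fun x hx => ?_)
        obtain ⟨hx0, hx1⟩ := hx
        show ν (Prod.mk x ⁻¹' S)
            = (volume.restrict (Ioc t (t + h))) (Prod.mk x ⁻¹' {p : ℝ × ℝ | p.1 ≤ p.2})
        have hslice : Prod.mk x ⁻¹' S = Icc (t - x) (t + h - x) := by
          ext y
          simp only [hSdef, mem_preimage, mem_setOf_eq, mem_Icc]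
          constructor
          · rintro ⟨h1, h2⟩; exact ⟨by linarith, by linarith⟩
          · rintro ⟨h1, h2⟩; exact ⟨by linarith, by linarith⟩
        have hslice2 : Prod.mk x ⁻¹' {p : ℝ × ℝ | p.1 ≤ p.2} = Ici x := rfl
        rw [hslice, hslice2, hνdef, aux_restrict_Icc,
          Measure.restrict_apply measurableSet_Ici]
        rcases le_or_gt x t with hxt | hxt
        · have hinter : Ici x ∩ Ioc t (t + h) = Ioc t (t + h) :=
            inter_eq_right.mpr fun u hu => le_trans hxt (le_of_lt hu.1)
          rw [min_eq_left (by linarith), max_eq_left (by linarith), hinter, Real.volume_Ioc]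
          congr 1; ring
        · have : Ici x ∩ Ioc t (t + h) = Icc x (t + h) := by
            ext u
            simp only [mem_inter_iff, mem_Ici, mem_Ioc, mem_Icc]
            constructor
            · rintro ⟨h1, h2, h3⟩; exact ⟨h1, h3⟩
            · rintro ⟨h1, h2⟩; exact ⟨h1, by linarith, h2⟩
          rw [this, min_eq_left (by linarith), max_eq_right (by linarith), Real.volume_Icc]
          congr 1; ring
      rw [hE, hL]
      rw [intervalIntegral.integral_of_le htth]
      have hFint : ∫ u in Ioc t (t + h), F₀ u
          = (∫⁻ u in Ioc t (t + h), μ (Iic u)).toReal := by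
        have heq : ∀ u : ℝ, F₀ u = (μ (Iic u)).toReal := hF₀
        calc ∫ u in Ioc t (t + h), F₀ u = ∫ u in Ioc t (t + h), (μ (Iic u)).toReal := by
              simp_rw [heq]
          _ = (∫⁻ u in Ioc t (t + h), μ (Iic u)).toReal :=
              integral_toReal (hmono.aemeasurable.restrict)
                (Filter.Eventually.of_forall fun u => measure_lt_top μ _)
      rw [hFint]
    · -- second identity
      set S : Set (ℝ × ℝ) := {p | p.1 + p.2 ∈ Icc (1 + t) (1 + t + h)} with hSdef
      have hS : MeasurableSet S := hadd measurableSet_Icc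
      have hE : {ω | ¬ X ω + Y ω ≤ 1 ∧ Z' ω ∈ Icc t (t + h)} = (fun ω => (X ω, Y ω)) ⁻¹' S := by
        ext ω
        simp only [mem_setOf_eq, hZ' ω, mem_preimage, hSdef, mem_Icc]
        constructor
        · rintro ⟨h1, h2⟩
          rw [if_neg h1] at h2
          exact ⟨by linarith [h2.1], by linarith [h2.2]⟩
        · rintro ⟨h1, h2⟩
          have h3 : ¬ X ω + Y ω ≤ 1 := by push_neg; linarith
          refine ⟨h3, ?_⟩
          rw [if_neg h3]
          exact ⟨by linarith, by linarith⟩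
      have hL : volume ((fun ω => (X ω, Y ω)) ⁻¹' S) = ∫⁻ u in Ioc t (t + h), μ (Ioi u) := by
        rw [hev S hS]
        have hswap := aux_swap (μ := μ) (τ := volume.restrict (Ioc t (t + h)))
          (S := {p : ℝ × ℝ | p.2 < p.1}) (measurableSet_lt measurable_snd measurable_fst)
        have hl : (fun u => μ ((fun x => (x, u)) ⁻¹' {p : ℝ × ℝ | p.2 < p.1}))
            = fun u => μ (Ioi u) := rfl
        rw [hl] at hswap
        rw [hswap]
        refine lintegral_congr_ae (hae.mono fun x hx => ?_)
        obtain ⟨hx0, hx1⟩ := hx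
        show ν (Prod.mk x ⁻¹' S)
            = (volume.restrict (Ioc t (t + h))) (Prod.mk x ⁻¹' {p : ℝ × ℝ | p.2 < p.1})
        have hslice : Prod.mk x ⁻¹' S = Icc (1 + t - x) (1 + t + h - x) := by
          ext y
          simp only [hSdef, mem_preimage, mem_setOf_eq, mem_Icc]
          constructor
          · rintro ⟨h1, h2⟩; exact ⟨by linarith, by linarith⟩
          · rintro ⟨h1, h2⟩; exact ⟨by linarith, by linarith⟩
        have hslice2 : Prod.mk x ⁻¹' {p : ℝ × ℝ | p.2 < p.1} = Iio x := rfl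
        rw [hslice, hslice2, hνdef, aux_restrict_Icc,
          Measure.restrict_apply measurableSet_Iio]
        rcases le_or_gt x (t + h) with hxth | hxth
        · have : Iio x ∩ Ioc t (t + h) = Ioo t x := by
            ext u
            simp only [mem_inter_iff, mem_Iio, mem_Ioc, mem_Ioo]
            constructor
            · rintro ⟨h1, h2, h3⟩; exact ⟨h2, h1⟩
            · rintro ⟨h1, h2⟩; exact ⟨h2, h1, by linarith⟩
          rw [this, min_eq_right (by linarith), max_eq_left (by linarith), Real.volume_Ioo]
          congr 1; ring
        · have hinter : Iio x ∩ Ioc t (t + h) = Ioc t (t + h) :=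
            inter_eq_right.mpr fun u hu => lt_of_le_of_lt hu.2 hxth
          rw [min_eq_left (by linarith), max_eq_left (by linarith), hinter, Real.volume_Ioc]
          congr 1; ring
      rw [hE, hL]
      rw [intervalIntegral.integral_of_le htth]
      have hμIoi : ∀ u : ℝ, (1 : ℝ) - F₀ u = (μ (Ioi u)).toReal := by
        intro u
        have h1 : μ (Ioi u) = 1 - μ (Iic u) := by
          rw [← compl_Iic, measure_compl measurableSet_Iic (measure_ne_top _ _), measure_univ]
        rw [hF₀, h1, ENNReal.toReal_sub_of_le prob_le_one ENNReal.one_ne_top, ENNReal.toReal_one]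
      have hFint : ∫ u in Ioc t (t + h), (1 - F₀ u)
          = (∫⁻ u in Ioc t (t + h), μ (Ioi u)).toReal := by
        calc ∫ u in Ioc t (t + h), (1 - F₀ u)
            = ∫ u in Ioc t (t + h), (μ (Ioi u)).toReal := by simp_rw [hμIoi]
          _ = (∫⁻ u in Ioc t (t + h), μ (Ioi u)).toReal :=
              integral_toReal (hanti.aemeasurable.restrict)
                (Filter.Eventually.of_forall fun u => measure_lt_top μ _)
      rw [hFint]
end

section
/- Let g be an integrable density on [0,∞), F̂ and F_0 distribution functions on [0,∞), and θ a bounded measurable function such that ∫_{z ≥ x} θ(z) g(z-x) dz = x - ∫ u dF̂(u) for all x in the support of F_0. Let H_0 be the distribution of Z = X + Y with X ~ F_0 and Y ~ g independent. Then ∫ x d(F̂ - F_0)(x) = -∫ θ(z) dH_0(z). -/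
open MeasureTheory Set

/-- Deconvolution identity: if `∫_{z≥x} θ(z) g(z-x) dz = x - ∫ u dF̂(u)` for
`F₀`-a.e. `x` (i.e. all `x` in the support of `F₀`), then
`∫ x d(F̂ - F₀)(x) = -∫ θ dH₀`, where `H₀` is the law of `X + Y`,
`X ~ F₀`, `Y` with density `g`, independent. -/
theorem stmt10 (g : ℝ → ℝ) (hgmeas : Measurable g) (hgnn : ∀ y, 0 ≤ g y)
    (hgsupp : ∀ y, y < 0 → g y = 0) (hgdens : ∫ y, g y = 1)
    (μhat ν : Measure ℝ) [IsProbabilityMeasure μhat] [IsProbabilityMeasure ν]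
    (hμhat : μhat (Ici 0) = 1) (hν : ν (Ici 0) = 1)
    (hμmom : Integrable (fun x : ℝ => x) μhat)
    (hνmom : Integrable (fun x : ℝ => x) ν)
    (θ : ℝ → ℝ) (hθmeas : Measurable θ) (C : ℝ) (hθbd : ∀ z, |θ z| ≤ C)
    (hadj : ∀ᵐ x ∂ν,
      (∫ z in Ici x, θ z * g (z - x)) = x - ∫ u, u ∂μhat) :
    (∫ x, x ∂μhat) - ∫ x, x ∂ν
      = - ∫ z, θ z
          ∂(Measure.map (fun p : ℝ × ℝ => p.1 + p.2)
              (ν.prod (volume.withDensity (fun y => ENNReal.ofReal (g y))))) := by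
  have hgint : Integrable g := by
    by_contra h
    rw [integral_undef h] at hgdens
    norm_num at hgdens
  set μg : Measure ℝ := volume.withDensity (fun y => ENNReal.ofReal (g y)) with hμg
  have hμgprob : IsProbabilityMeasure μg := by
    constructor
    rw [hμg, withDensity_apply _ MeasurableSet.univ, Measure.restrict_univ,
      ← ofReal_integral_eq_lintegral_ofReal hgint (ae_of_all _ hgnn), hgdens]
    simp
  have haddmeas : Measurable (fun p : ℝ × ℝ => p.1 + p.2) :=
    measurable_fst.add measurable_snd
  have hmap : ∫ z, θ z ∂(Measure.map (fun p : ℝ × ℝ => p.1 + p.2) (ν.prod μg))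
      = ∫ p : ℝ × ℝ, θ (p.1 + p.2) ∂(ν.prod μg) :=
    integral_map haddmeas.aemeasurable hθmeas.aestronglyMeasurable
  have hintprod : Integrable (fun p : ℝ × ℝ => θ (p.1 + p.2)) (ν.prod μg) := by
    refine (integrable_const C).mono' ((hθmeas.comp haddmeas).aestronglyMeasurable)
      (ae_of_all _ fun p => ?_)
    simpa using hθbd (p.1 + p.2)
  have hprod : ∫ p : ℝ × ℝ, θ (p.1 + p.2) ∂(ν.prod μg)
      = ∫ x, ∫ y, θ (x + y) ∂μg ∂ν := integral_prod _ hintprod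
  set c : ℝ := ∫ u, u ∂μhat with hc
  have hinner : ∀ x : ℝ, (∫ y, θ (x + y) ∂μg) = ∫ z in Ici x, θ z * g (z - x) := by
    intro x
    have h1 : (∫ y, θ (x + y) ∂μg) = ∫ y, (g y).toNNReal • θ (x + y) := by
      rw [hμg]
      exact integral_withDensity_eq_integral_smul
        (hgmeas.real_toNNReal) _
    have h2 : (fun y => (g y).toNNReal • θ (x + y))
        = fun y => θ (x + y) * g ((x + y) - x) := by
      funext y
      rw [NNReal.smul_def, Real.coe_toNNReal _ (hgnn y)]
      simp [mul_comm]
    have h3 : (∫ y, θ (x + y) * g ((x + y) - x))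
        = ∫ z, θ z * g (z - x) := by
      exact integral_add_left_eq_self (fun z => θ z * g (z - x)) x
    rw [h1, h2, h3]
    symm
    apply setIntegral_eq_integral_of_forall_compl_eq_zero
    intro z hz
    have : z - x < 0 := by simp at hz; linarith
    simp [hgsupp _ this]
  have hae : (fun x => ∫ y, θ (x + y) ∂μg) =ᵐ[ν] fun x => x - c := by
    filter_upwards [hadj] with x hx
    rw [hinner x, hx]
  have : ∫ x, ∫ y, θ (x + y) ∂μg ∂ν = (∫ x, x ∂ν) - c := by
    rw [integral_congr_ae hae, integral_sub hνmom (integrable_const c),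
      integral_const]
    simp
  rw [hmap, hprod, this]
  ring
end
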